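/- Let C be a monoidal category whose unit 𝟙_C is an initial object, and suppose the identity functor of C admits a unital magma structure (μ, η). Then for objects A, B, the cospan A —ι₁→ A ⊗ B ←ι₂— B, where ι₁ := (ρ_A).inv ≫ (A ◁ η_B) and ι₂ := (λ_B).inv ≫ (η_A ▷ B), is a binary coproduct of A and B if and only if ((ρ_A).inv ⊗ (λ_B).inv) ≫ ((A ◁ η_B) ⊗ (η_A ▷ B)) ≫ μ_{A⊗B} = 𝟙_{A⊗B}. -/

import Mathlib

/-!
The only candidate for the copairing of `f : A ⟶ X` and `g : B ⟶ X` is `(f ⊗ g) ≫ μ_X`: the unit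
laws together with naturality of `η` show that it restricts to `f` and `g` along `ι₁` and `ι₂`,
and naturality of `μ` shows `copair f g ≫ h = copair (f ≫ h) (g ≫ h)`. Hence every `h` out of
`A ⊗ B` equals `copair ι₁ ι₂ ≫ h`, so copairings are unique exactly when `copair ι₁ ι₂ = 𝟙`.
-/

open CategoryTheory CategoryTheory.Limits CategoryTheory.MonoidalCategory

/-- A unital magma structure on the identity functor of a monoidal category: natural
families `μ_A : A ⊗ A ⟶ A` and `η_A : 𝟙_C ⟶ A` satisfying the two unit laws. -/
structure IdMagma (C : Type*) [Category C] [MonoidalCategory C] where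
  μ : ∀ A : C, A ⊗ A ⟶ A
  η : ∀ A : C, 𝟙_ C ⟶ A
  μ_natural : ∀ {A B : C} (f : A ⟶ B), (f ⊗ₘ f) ≫ μ B = μ A ≫ f
  η_natural : ∀ {A B : C} (f : A ⟶ B), η A ≫ f = η B
  left_unit : ∀ A : C, (λ_ A).inv ≫ (η A ▷ A) ≫ μ A = 𝟙 A
  right_unit : ∀ A : C, (ρ_ A).inv ≫ (A ◁ η A) ≫ μ A = 𝟙 A

namespace IdMagma

variable {C : Type*} [Category C] [MonoidalCategory C] (m : IdMagma C)

def inl (A B : C) : A ⟶ A ⊗ B := (ρ_ A).inv ≫ (A ◁ m.η B)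

def inr (A B : C) : B ⟶ A ⊗ B := (λ_ B).inv ≫ (m.η A ▷ B)

def copair {A B X : C} (f : A ⟶ X) (g : B ⟶ X) : A ⊗ B ⟶ X := (f ⊗ₘ g) ≫ m.μ X

lemma inl_copair {A B X : C} (f : A ⟶ X) (g : B ⟶ X) : m.inl A B ≫ m.copair f g = f := by
  rw [inl, copair, Category.assoc, ← Category.assoc (A ◁ _), ← id_tensorHom,
    tensorHom_comp_tensorHom, Category.id_comp, m.η_natural, MonoidalCategory.tensorHom_def,
    Category.assoc, ← rightUnitor_inv_naturality_assoc, m.right_unit, Category.comp_id]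

lemma inr_copair {A B X : C} (f : A ⟶ X) (g : B ⟶ X) : m.inr A B ≫ m.copair f g = g := by
  rw [inr, copair, Category.assoc, ← Category.assoc (_ ▷ B), ← tensorHom_id,
    tensorHom_comp_tensorHom, Category.id_comp, m.η_natural, tensorHom_def',
    Category.assoc, ← leftUnitor_inv_naturality_assoc, m.left_unit, Category.comp_id]

lemma copair_comp {A B X Y : C} (f : A ⟶ X) (g : B ⟶ X) (h : X ⟶ Y) :
    m.copair f g ≫ h = m.copair (f ≫ h) (g ≫ h) := by
  rw [copair, copair, Category.assoc, ← m.μ_natural, tensorHom_comp_tensorHom_assoc]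

lemma copair_inl_inr (A B : C) : m.copair (m.inl A B) (m.inr A B) =
    ((ρ_ A).inv ⊗ₘ (λ_ B).inv) ≫ ((A ◁ m.η B) ⊗ₘ (m.η A ▷ B)) ≫ m.μ (A ⊗ B) := by
  rw [copair, inl, inr, tensorHom_comp_tensorHom_assoc]

lemma nonempty_isColimit_iff_copair_inl_inr_eq_id (A B : C) :
    Nonempty (IsColimit (BinaryCofan.mk (m.inl A B) (m.inr A B))) ↔
      m.copair (m.inl A B) (m.inr A B) = 𝟙 (A ⊗ B) := by
  constructor
  · rintro ⟨hc⟩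
    refine BinaryCofan.IsColimit.hom_ext hc ?_ ?_
    · exact (m.inl_copair _ _).trans (Category.comp_id _).symm
    · exact (m.inr_copair _ _).trans (Category.comp_id _).symm
  · intro h
    refine ⟨BinaryCofan.IsColimit.mk _ m.copair m.inl_copair m.inr_copair ?_⟩
    intro X f g (k : A ⊗ B ⟶ X) hf hg
    calc k = m.copair (m.inl A B) (m.inr A B) ≫ k := by rw [h, Category.id_comp]
      _ = m.copair f g := by rw [copair_comp, ← hf, ← hg]; rfl

end IdMagma

theorem coproduct_iff_idempotent_eq_id_general {C : Type*} [Category C] [MonoidalCategory C]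
    (m : IdMagma C) (A B : C) :
    Nonempty (IsColimit (BinaryCofan.mk
        ((ρ_ A).inv ≫ (A ◁ m.η B)) ((λ_ B).inv ≫ (m.η A ▷ B)))) ↔
    ((ρ_ A).inv ⊗ₘ (λ_ B).inv) ≫ ((A ◁ m.η B) ⊗ₘ (m.η A ▷ B)) ≫ m.μ (A ⊗ B) = 𝟙 (A ⊗ B) := by
  rw [← m.copair_inl_inr]
  exact m.nonempty_isColimit_iff_copair_inl_inr_eq_id A B

/-- In a monoidal category with initial unit and a unital magma structure on the identity
functor, the canonical cospan on `A ⊗ B` is a binary coproduct iff the canonical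
endomorphism of `A ⊗ B` is the identity. -/
theorem coproduct_iff_idempotent_eq_id {C : Type*} [Category C] [MonoidalCategory C]
    (hI : IsInitial (𝟙_ C)) (m : IdMagma C) (A B : C) :
    Nonempty (IsColimit (BinaryCofan.mk
        ((ρ_ A).inv ≫ (A ◁ m.η B)) ((λ_ B).inv ≫ (m.η A ▷ B)))) ↔
    ((ρ_ A).inv ⊗ₘ (λ_ B).inv) ≫ ((A ◁ m.η B) ⊗ₘ (m.η A ▷ B)) ≫ m.μ (A ⊗ B) = 𝟙 (A ⊗ B) :=
  coproduct_iff_idempotent_eq_id_general m A B
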